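/- For any nonempty closed hemispherical subset W of Sⁿ⁺¹, the double spherical polar of the spherical convex hull equals the spherical convex hull itself: (s-conv W)°° = s-conv W. -/

import Mathlib

open RealInnerProductSpace

/-- The unit sphere `Sⁿ⁺¹` in `ℝⁿ⁺²`. -/
def sph (n : ℕ) : Set (EuclideanSpace ℝ (Fin (n + 2))) :=
  Metric.sphere (0 : EuclideanSpace ℝ (Fin (n + 2))) 1

/-- The closed hemisphere centered at `P`. -/
def hemi (n : ℕ) (P : EuclideanSpace ℝ (Fin (n + 2))) :
    Set (EuclideanSpace ℝ (Fin (n + 2))) :=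
  {Q ∈ sph n | 0 ≤ ⟪P, Q⟫}

/-- The spherical polar set `W° = ⋂_{P ∈ W} H(P)`. -/
def spolar (n : ℕ) (W : Set (EuclideanSpace ℝ (Fin (n + 2)))) :
    Set (EuclideanSpace ℝ (Fin (n + 2))) :=
  {Q ∈ sph n | ∀ P ∈ W, 0 ≤ ⟪P, Q⟫}

/-- `W` is hemispherical: disjoint from some closed hemisphere. -/
def Hemispherical (n : ℕ) (W : Set (EuclideanSpace ℝ (Fin (n + 2)))) : Prop :=
  ∃ Q ∈ sph n, W ∩ hemi n Q = ∅

/-- The spherical convex hull: normalized nonnegative convex combinations of points of `W`. -/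
def sconv (n : ℕ) (W : Set (EuclideanSpace ℝ (Fin (n + 2)))) :
    Set (EuclideanSpace ℝ (Fin (n + 2))) :=
  {x | ∃ (k : ℕ) (t : Fin k → ℝ) (P : Fin k → EuclideanSpace ℝ (Fin (n + 2))),
    (∀ i, P i ∈ W) ∧ (∀ i, 0 ≤ t i) ∧ (∑ i, t i) = 1 ∧
    x = ‖∑ i, t i • P i‖⁻¹ • ∑ i, t i • P i}

/-! Because `W` misses a closed hemisphere, its convex hull `K` avoids `0`, and it is compact by
Carathéodory's theorem; `s-conv W` is the radial projection of `K` onto the sphere. A unit vector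
`x` outside `s-conv W` spans a ray disjoint from `K`. Strictly separating the ray from `K` and
tilting the hyperplane slightly gives `P` with `⟪y, P⟫ > 0` on `K` and `⟪x, P⟫ < 0`, so
`P / ‖P‖ ∈ (s-conv W)°` shows `x ∉ (s-conv W)°°`. -/

open Set

section ConvexHull

variable {E : Type*} [NormedAddCommGroup E] [NormedSpace ℝ E] [FiniteDimensional ℝ E]

/-- Carathéodory's theorem, with the affinely independent families padded by zero weights to
exactly `finrank ℝ E + 1` points. -/
theorem convexHull_eq_image_stdSimplex {s : Set E} (hs : s.Nonempty) :
    convexHull ℝ s = (fun p : (Fin (Module.finrank ℝ E + 1) → ℝ) ×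
        (Fin (Module.finrank ℝ E + 1) → E) => ∑ j, p.1 j • p.2 j) ''
      (stdSimplex ℝ _ ×ˢ univ.pi fun _ => s) := by
  classical
  refine Subset.antisymm (fun x hx => ?_) ?_
  · obtain ⟨p₀, hp₀⟩ := hs
    obtain ⟨ι, _, z, w, hzs, hai, hw, hw1, rfl⟩ := eq_pos_convex_span_of_mem_convexHull hx
    obtain ⟨e⟩ := Function.Embedding.nonempty_of_card_le (β := Fin (Module.finrank ℝ E + 1))
      (by simpa using hai.card_le_finrank_succ.trans (Nat.succ_le_succ (Submodule.finrank_le _)))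
    have hw' : ∀ j ∉ range e, Function.extend e w 0 j = 0 := fun j hj =>
      Function.extend_apply' _ _ _ fun ⟨i, hi⟩ => hj ⟨i, hi⟩
    refine ⟨(Function.extend e w 0, Function.extend e z fun _ => p₀),
      ⟨⟨fun j => ?_, ?_⟩, fun j _ => ?_⟩, ?_⟩
    · by_cases hj : j ∈ range e
      · obtain ⟨i, rfl⟩ := hj
        simpa [e.injective.extend_apply] using (hw i).le
      · simp [hw' j hj]
    · rw [← hw1]
      exact (Fintype.sum_of_injective e e.injective _ _ hw' fun i => by
        simp [e.injective.extend_apply]).symm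
    · by_cases hj : j ∈ range e
      · obtain ⟨i, rfl⟩ := hj
        simpa [e.injective.extend_apply] using hzs (mem_range_self i)
      · simpa [Function.extend_apply' _ _ _ fun ⟨i, hi⟩ => hj ⟨i, hi⟩] using hp₀
    · exact (Fintype.sum_of_injective e e.injective _ _ (fun j hj => by simp [hw' j hj])
        fun i => by simp [e.injective.extend_apply]).symm
  · rintro _ ⟨⟨w, z⟩, ⟨hw, hz⟩, rfl⟩
    exact mem_convexHull_of_exists_fintype w z hw.1 hw.2 (fun i => hz i (mem_univ i)) rfl

theorem IsCompact.convexHull {s : Set E} (hs : IsCompact s) : IsCompact (convexHull ℝ s) := by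
  rcases s.eq_empty_or_nonempty with rfl | hne
  · simp
  rw [convexHull_eq_image_stdSimplex hne]
  exact ((isCompact_stdSimplex _ _).prod (isCompact_univ_pi fun _ => hs)).image (by fun_prop)

end ConvexHull

section Separation

variable {E : Type*} [NormedAddCommGroup E] [InnerProductSpace ℝ E] [CompleteSpace E]

theorem exists_inner_pos_inner_neg_of_forall_smul_notMem {K : Set E} (hKconv : Convex ℝ K)
    (hK : IsCompact K) (hK1 : K ⊆ Metric.closedBall 0 1) {x : E} (hx : ‖x‖ = 1)
    (hxK : ∀ t : ℝ, 0 ≤ t → t • x ∉ K) :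
    ∃ P : E, (∀ y ∈ K, 0 < ⟪y, P⟫) ∧ ⟪x, P⟫ < 0 := by
  have hray_conv : Convex ℝ ((· • x) '' Ici (0 : ℝ)) :=
    (convex_Ici 0).linear_image (LinearMap.toSpanSingleton ℝ E x)
  have hdisj : Disjoint ((· • x) '' Ici (0 : ℝ)) K := by
    rw [Set.disjoint_left]
    rintro _ ⟨t, ht, rfl⟩
    exact hxK t ht
  obtain ⟨f, u, v, hfray, huv, hfK⟩ := geometric_hahn_banach_closed_compact hray_conv
    (isClosedMap_smul_left x _ isClosed_Ici) hKconv hK hdisj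
  have hu : 0 < u := by simpa using hfray _ ⟨0, self_mem_Ici, rfl⟩
  have hfx : f x ≤ 0 := by
    by_contra! h
    have := hfray _ ⟨u / f x, div_nonneg hu.le h.le, rfl⟩
    rw [map_smul, smul_eq_mul, div_mul_cancel₀ _ h.ne'] at this
    exact lt_irrefl _ this
  -- tilting the separating hyperplane by `v • x` makes the inequality at `x` strict
  refine ⟨(InnerProductSpace.toDual ℝ E).symm f - v • x, fun y hy => ?_, ?_⟩
  · have hxy : ⟪y, x⟫ ≤ 1 := (real_inner_le_norm y x).trans <| by
      rw [hx, mul_one]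
      exact mem_closedBall_zero_iff.mp (hK1 hy)
    rw [inner_sub_right, real_inner_smul_right, real_inner_comm, InnerProductSpace.toDual_symm_apply]
    nlinarith [hfK y hy]
  · rw [inner_sub_right, real_inner_smul_right, real_inner_comm, InnerProductSpace.toDual_symm_apply,
      real_inner_self_eq_norm_sq, hx]
    linarith

end Separation

section Spherical

variable {n : ℕ} {W : Set (EuclideanSpace ℝ (Fin (n + 2)))}

theorem sconv_eq_image_convexHull : sconv n W = (fun y => ‖y‖⁻¹ • y) '' convexHull ℝ W := by
  ext x
  constructor
  · rintro ⟨k, t, P, hPW, ht, ht1, rfl⟩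
    exact ⟨_, mem_convexHull_of_exists_fintype t P ht ht1 hPW rfl, rfl⟩
  · rintro ⟨y, hy, rfl⟩
    obtain ⟨ι, _, w, z, hw, hw1, hz, rfl⟩ := mem_convexHull_iff_exists_fintype.mp hy
    let e := (Fintype.equivFin ι).symm
    refine ⟨Fintype.card ι, w ∘ e, z ∘ e, fun i => hz _, fun i => hw _, ?_, ?_⟩
    · rwa [Function.comp_def, e.sum_comp w]
    · simp only [Function.comp_apply, e.sum_comp fun i => w i • z i]

theorem zero_notMem_convexHull_of_hemispherical (hWs : W ⊆ sph n) (hW : Hemispherical n W) :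
    (0 : EuclideanSpace ℝ (Fin (n + 2))) ∉ convexHull ℝ W := by
  obtain ⟨Q, -, hQW⟩ := hW
  have hneg : W ⊆ {y | ⟪Q, y⟫ < 0} := fun P hP => not_le.mp fun h =>
    (Set.eq_empty_iff_forall_notMem.mp hQW) P ⟨hP, hWs hP, h⟩
  intro h0
  simpa using convexHull_min hneg (convex_halfSpace_lt (innerₗ _ Q).isLinear 0) h0

theorem sconv_subset_sph (h0 : (0 : EuclideanSpace ℝ (Fin (n + 2))) ∉ convexHull ℝ W) :
    sconv n W ⊆ sph n := by
  rw [sconv_eq_image_convexHull]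
  rintro _ ⟨y, hy, rfl⟩
  exact mem_sphere_zero_iff_norm.mpr (norm_smul_inv_norm (ne_of_mem_of_not_mem hy h0))

theorem mem_sconv_of_smul_mem_convexHull {x : EuclideanSpace ℝ (Fin (n + 2))} (hx : ‖x‖ = 1)
    {t : ℝ} (ht : 0 < t) (htx : t • x ∈ convexHull ℝ W) : x ∈ sconv n W := by
  rw [sconv_eq_image_convexHull]
  refine ⟨t • x, htx, ?_⟩
  show ‖t • x‖⁻¹ • t • x = x
  rw [norm_smul, hx, Real.norm_of_nonneg ht.le, mul_one, smul_smul, inv_mul_cancel₀ ht.ne',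
    one_smul]

theorem inv_norm_smul_mem_spolar_sconv {P : EuclideanSpace ℝ (Fin (n + 2))} (hP0 : P ≠ 0)
    (hP : ∀ y ∈ convexHull ℝ W, 0 ≤ ⟪y, P⟫) : ‖P‖⁻¹ • P ∈ spolar n (sconv n W) := by
  refine ⟨mem_sphere_zero_iff_norm.mpr (norm_smul_inv_norm hP0), ?_⟩
  rw [sconv_eq_image_convexHull]
  rintro _ ⟨y, hy, rfl⟩
  rw [real_inner_smul_left, real_inner_smul_right]
  have := hP y hy
  positivity

theorem subset_spolar_spolar {S : Set (EuclideanSpace ℝ (Fin (n + 2)))} (hS : S ⊆ sph n) :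
    S ⊆ spolar n (spolar n S) :=
  fun x hx => ⟨hS hx, fun P hP => real_inner_comm x P ▸ hP.2 x hx⟩

end Spherical

theorem spolar_spolar_sconv_general (n : ℕ) (W : Set (EuclideanSpace ℝ (Fin (n + 2))))
    (hcl : IsClosed W) (hWs : W ⊆ sph n) (hW : Hemispherical n W) :
    spolar n (spolar n (sconv n W)) = sconv n W := by
  have h0 := zero_notMem_convexHull_of_hemispherical hWs hW
  refine Subset.antisymm (fun x hx => ?_) (subset_spolar_spolar (sconv_subset_sph h0))
  have hx1 : ‖x‖ = 1 := mem_sphere_zero_iff_norm.mp hx.1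
  by_contra hxW
  have hray : ∀ t : ℝ, 0 ≤ t → t • x ∉ convexHull ℝ W := by
    rintro t ht htx
    rcases ht.eq_or_lt with rfl | ht
    · exact h0 (by simpa using htx)
    · exact hxW (mem_sconv_of_smul_mem_convexHull hx1 ht htx)
  obtain ⟨P, hPW, hPx⟩ := exists_inner_pos_inner_neg_of_forall_smul_notMem
    (convex_convexHull ℝ W) ((isCompact_sphere 0 1).of_isClosed_subset hcl hWs).convexHull
    (convexHull_min (hWs.trans Metric.sphere_subset_closedBall) (convex_closedBall 0 1)) hx1 hray
  have hP0 : P ≠ 0 := by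
    rintro rfl
    simp at hPx
  have hxP := hx.2 _ (inv_norm_smul_mem_spolar_sconv hP0 fun y hy => (hPW y hy).le)
  rw [real_inner_smul_left, real_inner_comm] at hxP
  exact (mul_neg_of_pos_of_neg (inv_pos.mpr (norm_pos_iff.mpr hP0)) hPx).not_ge hxP

theorem spolar_spolar_sconv (n : ℕ) (W : Set (EuclideanSpace ℝ (Fin (n + 2))))
    (hne : W.Nonempty) (hcl : IsClosed W) (hWs : W ⊆ sph n) (hW : Hemispherical n W) :
    spolar n (spolar n (sconv n W)) = sconv n W :=
  spolar_spolar_sconv_general n W hcl hWs hW
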